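/- Let N = e^F with F ∈ Σ₀ and F an odd power series (all even coefficients zero). Defining x_n! via N(t) = Σ t^n/x_n! and p_n(η) via N(t)/N(ηt) = Σ p_n(η) t^n/x_n!, one has p_n(η) = Σ_{k=0}^n (x_n!/(x_k! x_{n−k}!)) (−η)^k, and these polynomials are nonnegative on [0,1). -/

import Mathlib

open PowerSeries Finset

/-- Σ₀: zero constant term, positive linear coefficient, nonnegative higher coefficients. -/
def Sigma0 : Set (PowerSeries ℝ) :=
  {F | PowerSeries.coeff 0 F = 0 ∧ 0 < PowerSeries.coeff 1 F ∧
    ∀ n, 2 ≤ n → 0 ≤ PowerSeries.coeff n F}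

/-- Σ: constant term 1 and all higher coefficients strictly positive. -/
def SigmaSet : Set (PowerSeries ℝ) :=
  {N | PowerSeries.coeff 0 N = 1 ∧ ∀ n, 1 ≤ n → 0 < PowerSeries.coeff n N}

/-- Formal exponential of a power series (valid when F has zero constant term). -/
noncomputable def expPS (F : PowerSeries ℝ) : PowerSeries ℝ :=
  PowerSeries.mk fun n =>
    ∑ k ∈ Finset.range (n + 1), PowerSeries.coeff n (F ^ k) / (Nat.factorial k)

/-- G_{N,η}(t) = N(t)/N(ηt). -/
noncomputable def Gfun (N : PowerSeries ℝ) (η : ℝ) : PowerSeries ℝ :=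
  N * (PowerSeries.rescale η N)⁻¹

/-- Σ₊ = { N ∈ Σ : ∀ η ∈ [0,1), G_{N,η} ∈ Σ }. -/
noncomputable def SigmaPlus : Set (PowerSeries ℝ) :=
  {N | N ∈ SigmaSet ∧ ∀ η ∈ Set.Ico (0 : ℝ) 1, Gfun N η ∈ SigmaSet}


lemma coeff_pow_zero_of_lt {F : PowerSeries ℝ} (hF : constantCoeff F = 0)
    {k n : ℕ} (h : n < k) : PowerSeries.coeff n (F ^ k) = 0 := by
  have hX : (PowerSeries.X : PowerSeries ℝ) ^ k ∣ F ^ k :=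
    pow_dvd_pow_of_dvd (PowerSeries.X_dvd_iff.mpr hF) k
  exact PowerSeries.X_pow_dvd_iff.mp hX n h

lemma coeff_expPS (F : PowerSeries ℝ) (n : ℕ) :
    PowerSeries.coeff n (expPS F) =
      ∑ k ∈ Finset.range (n + 1), PowerSeries.coeff n (F ^ k) / (Nat.factorial k) :=
  PowerSeries.coeff_mk _ _

lemma coeff_expPS_ext (F : PowerSeries ℝ) (hF : constantCoeff F = 0) {n m : ℕ} (h : n ≤ m) :
    coeff n (expPS F) = ∑ k ∈ range (m + 1), coeff n (F ^ k) / (Nat.factorial k) := by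
  rw [coeff_expPS]
  apply Finset.sum_subset
  · intro x hx; simp only [mem_range] at *; omega
  · intro k _ hk'
    have : n < k := by simp only [mem_range] at hk'; omega
    rw [coeff_pow_zero_of_lt hF this, zero_div]

lemma triangle_square (n : ℕ) (g : ℕ → ℕ → ℝ) (hg : ∀ k l, n < k + l → g k l = 0) :
    ∑ m ∈ range (n + 1), ∑ k ∈ range (m + 1), g k (m - k)
      = ∑ k ∈ range (n + 1), ∑ l ∈ range (n + 1), g k l := by
  have h1 : ∀ m, ∑ k ∈ range (m + 1), g k (m - k)
      = ∑ ij ∈ Finset.HasAntidiagonal.antidiagonal m, g ij.1 ij.2 :=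
    fun m => (Finset.Nat.sum_antidiagonal_eq_sum_range_succ_mk (fun ij => g ij.1 ij.2) m).symm
  simp_rw [h1]
  rw [← Finset.sum_biUnion (by
    intro x _ y _ hxy
    simp only [Function.onFun]
    rw [Finset.disjoint_left]
    intro a ha ha'
    rw [Finset.HasAntidiagonal.mem_antidiagonal] at ha ha'
    exact hxy (by omega))]
  rw [← Finset.sum_product']
  apply Finset.sum_subset
  · intro ij hij
    simp only [Finset.mem_biUnion, Finset.mem_range, Finset.HasAntidiagonal.mem_antidiagonal] at hij
    obtain ⟨m, hm, rfl⟩ := hij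
    simp only [Finset.mem_product, Finset.mem_range]
    omega
  · intro ij hij hij'
    apply hg
    by_contra h
    push_neg at h
    exact hij' (by
      simp only [Finset.mem_biUnion, Finset.mem_range, Finset.HasAntidiagonal.mem_antidiagonal]
      exact ⟨ij.1 + ij.2, by omega, rfl⟩)

lemma expPS_add (A B : PowerSeries ℝ) (hA : constantCoeff A = 0)
    (hB : constantCoeff B = 0) :
    expPS (A + B) = expPS A * expPS B := by
  ext n
  set g : ℕ → ℕ → ℝ := fun k l => coeff n (A ^ k * B ^ l) / (Nat.factorial k * Nat.factorial l)
    with hgdef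
  have hg0 : ∀ k l, n < k + l → g k l = 0 := by
    intro k l h
    have hd : (X : PowerSeries ℝ) ^ (k + l) ∣ A ^ k * B ^ l := by
      rw [pow_add]
      exact mul_dvd_mul (pow_dvd_pow_of_dvd (X_dvd_iff.mpr hA) k)
        (pow_dvd_pow_of_dvd (X_dvd_iff.mpr hB) l)
    simp [hgdef, X_pow_dvd_iff.mp hd n h]
  have hLHS : coeff n (expPS (A + B))
      = ∑ m ∈ range (n + 1), ∑ k ∈ range (m + 1), g k (m - k) := by
    rw [coeff_expPS]
    refine Finset.sum_congr rfl fun m _ => ?_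
    rw [add_pow, map_sum, Finset.sum_div]
    refine Finset.sum_congr rfl fun k hk => ?_
    have hk' : k ≤ m := Nat.lt_succ_iff.mp (mem_range.mp hk)
    have hfact : ((m.choose k : ℝ)) * (Nat.factorial k) * (Nat.factorial (m - k))
        = (Nat.factorial m) := by
      exact_mod_cast congrArg (Nat.cast : ℕ → ℝ) (Nat.choose_mul_factorial_mul_factorial hk')
    have hcoeff : coeff n (A ^ k * B ^ (m - k) * (m.choose k : PowerSeries ℝ))
        = coeff n (A ^ k * B ^ (m - k)) * (m.choose k : ℝ) := by
      rw [← map_natCast C (m.choose k), coeff_mul_C]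
    rw [hcoeff, hgdef]
    have h1 : (Nat.factorial k : ℝ) ≠ 0 := Nat.cast_ne_zero.mpr (Nat.factorial_ne_zero k)
    have h2 : (Nat.factorial (m - k) : ℝ) ≠ 0 := Nat.cast_ne_zero.mpr (Nat.factorial_ne_zero _)
    have h3 : (Nat.factorial m : ℝ) ≠ 0 := Nat.cast_ne_zero.mpr (Nat.factorial_ne_zero m)
    field_simp
    rw [← hfact]
    ring
  have hRHS : coeff n (expPS A * expPS B)
      = ∑ k ∈ range (n + 1), ∑ l ∈ range (n + 1), g k l := by
    rw [coeff_mul, Finset.Nat.sum_antidiagonal_eq_sum_range_succ_mk]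
    have hsplit : ∀ i ∈ range (n + 1),
        coeff i (expPS A) * coeff (n - i) (expPS B)
        = ∑ k ∈ range (n + 1), ∑ l ∈ range (n + 1),
            coeff i (A ^ k) * coeff (n - i) (B ^ l)
              / (Nat.factorial k * Nat.factorial l) := by
      intro i hi
      rw [coeff_expPS_ext A hA (Nat.lt_succ_iff.mp (mem_range.mp hi)),
        coeff_expPS_ext B hB (Nat.sub_le n i), Finset.sum_mul_sum]
      refine sum_congr rfl fun k _ => sum_congr rfl fun l _ => ?_
      rw [div_mul_div_comm]
    rw [Finset.sum_congr rfl hsplit, Finset.sum_comm]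
    refine sum_congr rfl fun k _ => ?_
    rw [Finset.sum_comm]
    refine sum_congr rfl fun l _ => ?_
    rw [hgdef]
    simp only
    rw [coeff_mul, Finset.Nat.sum_antidiagonal_eq_sum_range_succ_mk, Finset.sum_div]
  rw [hLHS, hRHS]
  exact triangle_square n g hg0

lemma expPS_rescale (F : PowerSeries ℝ) (a : ℝ) :
    rescale a (expPS F) = expPS (rescale a F) := by
  ext n
  rw [coeff_rescale, coeff_expPS, coeff_expPS, Finset.mul_sum]
  refine sum_congr rfl fun k _ => ?_
  rw [← map_pow, coeff_rescale]
  ring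

lemma expPS_zero : expPS (0 : PowerSeries ℝ) = 1 := by
  ext n
  rw [coeff_expPS, Finset.sum_eq_single 0]
  · simp
  · intro k _ hk0
    rw [zero_pow hk0]
    simp
  · intro h
    simp at h

lemma coeff_pow_nonneg {A : PowerSeries ℝ} (hA : ∀ n, 0 ≤ coeff n A) (k : ℕ) :
    ∀ n, 0 ≤ coeff n (A ^ k) := by
  induction k with
  | zero =>
    intro n
    rw [pow_zero, coeff_one]
    split <;> norm_num
  | succ k ih =>
    intro n
    rw [pow_succ, coeff_mul]
    exact Finset.sum_nonneg fun ij _ => mul_nonneg (ih _) (hA _)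

lemma coeff_expPS_nonneg {F : PowerSeries ℝ} (hF : ∀ n, 0 ≤ coeff n F) (n : ℕ) :
    0 ≤ coeff n (expPS F) := by
  rw [coeff_expPS]
  exact Finset.sum_nonneg fun k _ =>
    div_nonneg (coeff_pow_nonneg hF k n) (by positivity)

lemma coeff_pow_self {F : PowerSeries ℝ} (hF0 : constantCoeff F = 0) :
    ∀ n, coeff n (F ^ n) = (coeff 1 F) ^ n := by
  intro n
  induction n with
  | zero => simp
  | succ n ih =>
    rw [pow_succ', coeff_mul, Finset.sum_eq_single (1, n)]
    · rw [ih, pow_succ']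
    · rintro ⟨b1, b2⟩ hb hbne
      rw [Finset.HasAntidiagonal.mem_antidiagonal] at hb
      rcases Nat.lt_or_ge b2 n with h | h
      · rw [coeff_pow_zero_of_lt hF0 h, mul_zero]
      · have hb1 : b1 = 0 := by
          rcases Nat.eq_or_lt_of_le h with h2 | h2
          · exact absurd (by simp [Prod.ext_iff]; omega) hbne
          · omega
        subst hb1
        simp only [coeff_zero_eq_constantCoeff_apply, hF0, zero_mul]
    · intro h
      exact absurd (Finset.HasAntidiagonal.mem_antidiagonal.mpr (by omega)) h

lemma sigma0_coeff_nonneg {F : PowerSeries ℝ} (hF : F ∈ Sigma0) :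
    ∀ n, 0 ≤ coeff n F := by
  obtain ⟨h0, h1, h2⟩ := hF
  intro m
  match m with
  | 0 => exact h0.ge
  | 1 => exact h1.le
  | (m + 2) => exact h2 _ (by omega)

lemma coeff_expPS_pos {F : PowerSeries ℝ} (hF : F ∈ Sigma0) (n : ℕ) :
    0 < coeff n (expPS F) := by
  obtain ⟨h0, h1, h2⟩ := hF
  have hF0 : constantCoeff F = 0 := by
    rw [← coeff_zero_eq_constantCoeff_apply]; exact h0
  have hnn := sigma0_coeff_nonneg ⟨h0, h1, h2⟩
  rw [coeff_expPS]
  have hterm : 0 < coeff n (F ^ n) / (Nat.factorial n) := by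
    rw [coeff_pow_self hF0]
    positivity
  calc (0 : ℝ) < coeff n (F ^ n) / (Nat.factorial n) := hterm
    _ ≤ ∑ k ∈ range (n + 1), coeff n (F ^ k) / (Nat.factorial k) :=
      Finset.single_le_sum (f := fun k => coeff n (F ^ k) / (Nat.factorial k : ℝ))
        (fun k _ => div_nonneg (coeff_pow_nonneg hnn k n) (by positivity))
        (Finset.self_mem_range_succ n)

/-- For N = e^F with F ∈ Σ₀ odd, pₙ(η) = Σ_{k=0}^n (xₙ!/(x_k! x_{n−k}!)) (−η)^k,
and these polynomials are nonnegative on [0,1). -/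
theorem stmt13 (F : PowerSeries ℝ) (hF : F ∈ Sigma0)
    (hodd : ∀ n, Even n → PowerSeries.coeff n F = 0)
    (N : PowerSeries ℝ) (hN : N = expPS F)
    (xfact : ℕ → ℝ) (hxfact : ∀ n, xfact n = (PowerSeries.coeff n N)⁻¹)
    (p : ℕ → ℝ → ℝ)
    (hp : ∀ n (η : ℝ),
      PowerSeries.coeff n (N * (PowerSeries.rescale η N)⁻¹) = p n η / xfact n) :
    (∀ n (η : ℝ),
      p n η = ∑ k ∈ Finset.range (n + 1), xfact n / (xfact k * xfact (n - k)) * (-η) ^ k) ∧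
    ∀ n, ∀ η ∈ Set.Ico (0 : ℝ) 1, 0 ≤ p n η := by
  obtain ⟨h0, h1, h2⟩ := hF
  have hF0 : constantCoeff F = 0 := by
    rw [← coeff_zero_eq_constantCoeff_apply]; exact h0
  have hnn := sigma0_coeff_nonneg ⟨h0, h1, h2⟩
  have hpos : ∀ n, 0 < coeff n N := by
    intro n; rw [hN]; exact coeff_expPS_pos ⟨h0, h1, h2⟩ n
  have hne : ∀ n, coeff n N ≠ 0 := fun n => (hpos n).ne'
  have hresc0 : ∀ a : ℝ, constantCoeff (rescale a F) = 0 := by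
    intro a
    rw [← coeff_zero_eq_constantCoeff_apply, coeff_rescale, pow_zero, one_mul, h0]
  have hkey : ∀ a : ℝ, N * rescale a N = expPS (F + rescale a F) := by
    intro a
    rw [hN, expPS_rescale, expPS_add F _ hF0 (hresc0 a)]
  have hinvN : ∀ η : ℝ, (rescale η N)⁻¹ = rescale (-η) N := by
    intro η
    have hmain : N * rescale (-1 : ℝ) N = 1 := by
      rw [hkey (-1)]
      have hz : F + rescale (-1 : ℝ) F = 0 := by
        ext m
        rw [map_add, coeff_rescale, map_zero]
        rcases Nat.even_or_odd m with he | ho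
        · rw [hodd m he]; ring
        · rw [ho.neg_one_pow]; ring
      rw [hz, expPS_zero]
    have hmul : rescale η N * rescale (-η) N = 1 := by
      have h := congrArg (rescale η) hmain
      rw [map_mul, rescale_rescale, map_one] at h
      rw [show (-1 : ℝ) * η = -η by ring] at h
      exact h
    have hc : constantCoeff (rescale η N) ≠ 0 := by
      rw [← coeff_zero_eq_constantCoeff_apply, coeff_rescale, pow_zero, one_mul]
      exact hne 0
    exact (PowerSeries.inv_eq_iff_mul_eq_one hc).mpr (by rw [mul_comm]; exact hmul)
  have hcoeffG : ∀ n (η : ℝ), coeff n (N * (rescale η N)⁻¹)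
      = ∑ k ∈ range (n + 1), coeff k N * coeff (n - k) N * (-η) ^ k := by
    intro n η
    rw [hinvN, mul_comm, coeff_mul, Finset.Nat.sum_antidiagonal_eq_sum_range_succ_mk]
    refine sum_congr rfl fun k _ => ?_
    rw [coeff_rescale]
    ring
  have hpval : ∀ n (η : ℝ), p n η
      = (∑ k ∈ range (n + 1), coeff k N * coeff (n - k) N * (-η) ^ k) / coeff n N := by
    intro n η
    have h := hp n η
    rw [hcoeffG, hxfact, div_inv_eq_mul] at h
    rw [eq_div_iff (hne n)]
    exact h.symm
  constructor
  · intro n η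
    rw [hpval, Finset.sum_div]
    refine sum_congr rfl fun k _ => ?_
    rw [hxfact, hxfact, hxfact]
    have h1' := hne k
    have h2' := hne (n - k)
    have h3' := hne n
    field_simp
  · rintro n η ⟨hη0, hη1⟩
    rw [hpval]
    apply div_nonneg _ (hpos n).le
    rw [← hcoeffG n η, hinvN η, hkey (-η)]
    apply coeff_expPS_nonneg
    intro m
    rw [map_add, coeff_rescale]
    rcases Nat.even_or_odd m with he | ho
    · rw [hodd m he]; simp
    · rw [ho.neg_pow]
      have hle : η ^ m ≤ 1 := pow_le_one₀ hη0 hη1.le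
      nlinarith [hnn m, pow_nonneg hη0 m]
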